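/- Let K′ = max_{α∈R₀⁺} (ρ, α∨). Then for every w ∈ W and every x in the closed positive Weyl chamber ā₊, (ρ, x) − (ρ, w x) ≤ K′ · l(w) · max_{α ∈ R₀⁺ ∩ wR⁻} |(α, w x)| (with the convention that the maximum over an empty set is 0). -/

import Mathlib

open scoped BigOperators RealInnerProductSpace Classical

noncomputable section

variable {E : Type*} [NormedAddCommGroup E] [InnerProductSpace ℝ E] [FiniteDimensional ℝ E]

/-- The coroot `α∨ = 2α/|α|²`. -/
def coroot (α : E) : E := (2 / ⟪α, α⟫) • α

/-- The orthogonal reflection `r_α x = x - (α∨, x) α`. -/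
def rRefl (α : E) (x : E) : E := x - ⟪coroot α, x⟫ • α

/-- Data of an integral root system with positive subsystem and
a Weyl-invariant positive multiplicity function. -/
structure HOData (E : Type*) [NormedAddCommGroup E] [InnerProductSpace ℝ E] : Type _ where
  R : Finset E
  Rpos : Finset E
  k : E → ℝ
  k_pos : ∀ α ∈ R, 0 < k α
  root_ne_zero : ∀ α ∈ R, α ≠ 0
  pos_subset : Rpos ⊆ R
  pos_char : ∃ u : E, ∀ α ∈ R, (α ∈ Rpos ↔ 0 < ⟪α, u⟫)
  pos_or_neg : ∀ α ∈ R, α ∈ Rpos ∨ -α ∈ Rpos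
  neg_mem : ∀ α ∈ R, -α ∈ R
  integral : ∀ α ∈ R, ∀ β ∈ R, ∃ n : ℤ, ⟪coroot α, β⟫ = (n : ℝ)
  refl_mem : ∀ α ∈ R, ∀ β ∈ R, rRefl α β ∈ R
  k_inv : ∀ α ∈ R, ∀ β ∈ R, k (rRefl α β) = k β

/-- The Weyl group: the subgroup of linear isometries generated by the root reflections. -/
def weylGroup (D : HOData E) : Subgroup (E ≃ₗᵢ[ℝ] E) :=
  Subgroup.closure {w : E ≃ₗᵢ[ℝ] E | ∃ α ∈ D.R, ∀ x, w x = rRefl α x}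

/-- `ρ = (1/2) Σ_{α ∈ R⁺} k_α α`. -/
def rhoHO (D : HOData E) : E := (2:ℝ)⁻¹ • ∑ α ∈ D.Rpos, D.k α • α

/-- Regular points. -/
def HORegular (D : HOData E) (x : E) : Prop := ∀ α ∈ D.R, ⟪α, x⟫ ≠ 0

/-- The (open) positive Weyl chamber. -/
def posChamber (D : HOData E) : Set E := {x | ∀ α ∈ D.Rpos, 0 < ⟪α, x⟫}

/-- The positive indivisible roots `R₀⁺`. -/
def Rpos0 (D : HOData E) : Finset E := D.Rpos.filter (fun α => (2:ℝ)⁻¹ • α ∉ D.R)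

/-- The Opdam function `G_λ` for a real parameter `λ`: an analytic function,
normalized at `0`, satisfying the Cherednik differential-difference system. -/
def IsOpdamR (D : HOData E) (lam : E) (G : E → ℝ) : Prop :=
  AnalyticOnNhd ℝ G Set.univ ∧ G 0 = 1 ∧
  ∀ ξ x, HORegular D x →
    fderiv ℝ G x ξ =
      (∑ α ∈ D.Rpos, D.k α * ⟪α, ξ⟫ / (1 - Real.exp (-⟪α, x⟫)) * (G (rRefl α x) - G x))
      + ⟪rhoHO D + lam, ξ⟫ * G x

/-- The Opdam function `G_λ` for a complex parameter `λ = l1 + i l2 ∈ h`. -/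
def IsOpdamC (D : HOData E) (l1 l2 : E) (G : E → ℂ) : Prop :=
  AnalyticOnNhd ℝ G Set.univ ∧ G 0 = 1 ∧
  ∀ ξ x, HORegular D x →
    fderiv ℝ G x ξ =
      (∑ α ∈ D.Rpos, ((D.k α * ⟪α, ξ⟫ / (1 - Real.exp (-⟪α, x⟫)) : ℝ) : ℂ)
          * (G (rRefl α x) - G x))
      + (((⟪rhoHO D + l1, ξ⟫ : ℝ) : ℂ) + Complex.I * ((⟪l2, ξ⟫ : ℝ) : ℂ)) * G x

/-- The symmetrization `F(x) = |W|⁻¹ Σ_{w ∈ W} G(w x)` (real valued case). -/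
def Fsym (D : HOData E) [Fintype (weylGroup D)] (G : E → ℝ) (x : E) : ℝ :=
  (Fintype.card (weylGroup D) : ℝ)⁻¹ * ∑ w : weylGroup D, G (w.1 x)

/-- The symmetrization `F(x) = |W|⁻¹ Σ_{w ∈ W} G(w x)` (complex valued case). -/
def FsymC (D : HOData E) [Fintype (weylGroup D)] (G : E → ℂ) (x : E) : ℂ :=
  (Fintype.card (weylGroup D) : ℂ)⁻¹ * ∑ w : weylGroup D, G (w.1 x)

/-- `max_{w ∈ W} (w λ, x)`. -/
def maxW (D : HOData E) [Fintype (weylGroup D)] (lam x : E) : ℝ :=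
  ⨆ w : weylGroup D, ⟪w.1 lam, x⟫

/-!
Since `w` permutes the roots, `(ρ, x) - (ρ, w x) = Σ k_β (β, x)` over the inversions
`β ∈ R⁺ ∩ w⁻¹R⁻`. A divisible inversion `2γ` comes with the indivisible inversion `γ`, so the sum
is at most `Σ (k_γ + 2 k_{2γ}) (γ, x)` over the `l(w)` indivisible inversions `γ`. In
`2 (ρ, γ∨) = Σ_{α ∈ R⁺} k_α (α, γ∨)` the pairs `α, r_γ α` of positive roots cancel and all other
terms are nonnegative, among them those of `γ` and `2γ`; hence `k_γ + 2 k_{2γ} ≤ (ρ, γ∨) ≤ K'`.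
Finally `(γ, x) = |(α, w x)|` for `α = -w γ ∈ R₀⁺ ∩ w R⁻`.
-/

open Finset

section Reflection

variable {V : Type*} [NormedAddCommGroup V] [InnerProductSpace ℝ V] {α : V}

lemma inner_coroot_left (α x : V) : ⟪coroot α, x⟫ = 2 / ⟪α, α⟫ * ⟪α, x⟫ :=
  real_inner_smul_left _ _ _

lemma inner_coroot_self (hα : α ≠ 0) : ⟪coroot α, α⟫ = 2 := by
  have : ⟪α, α⟫ ≠ 0 := inner_self_ne_zero.mpr hα
  rw [inner_coroot_left]
  field_simp

lemma rRefl_self (hα : α ≠ 0) : rRefl α α = -α := by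
  rw [rRefl, inner_coroot_self hα]
  module

lemma rRefl_smul (α : V) (c : ℝ) (x : V) : rRefl α (c • x) = c • rRefl α x := by
  simp only [rRefl, real_inner_smul_right, smul_sub, smul_smul]

lemma inner_coroot_rRefl (hα : α ≠ 0) (x : V) : ⟪coroot α, rRefl α x⟫ = -⟪coroot α, x⟫ := by
  rw [rRefl, inner_sub_right, real_inner_smul_right, inner_coroot_self hα]
  ring

lemma rRefl_rRefl (hα : α ≠ 0) (x : V) : rRefl α (rRefl α x) = x := by
  rw [rRefl, inner_coroot_rRefl hα, rRefl]
  module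

end Reflection

namespace HOData

variable {V : Type*} [NormedAddCommGroup V] [InnerProductSpace ℝ V] (D : HOData V) {β γ x : V}

lemma k_neg (hβ : β ∈ D.R) : D.k (-β) = D.k β := by
  simpa only [rRefl_self (D.root_ne_zero β hβ)] using D.k_inv β hβ β hβ

lemma neg_notMem_Rpos (hβ : β ∈ D.Rpos) : -β ∉ D.Rpos := by
  obtain ⟨u, hu⟩ := D.pos_char
  intro hneg
  have h₁ := (hu β (D.pos_subset hβ)).mp hβ
  have h₂ := (hu _ (D.pos_subset hneg)).mp hneg
  rw [inner_neg_left] at h₂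
  linarith

lemma neg_mem_Rpos_of_notMem (hβ : β ∈ D.R) (h : β ∉ D.Rpos) : -β ∈ D.Rpos :=
  (D.pos_or_neg β hβ).resolve_left h

lemma Rpos0_subset : Rpos0 D ⊆ D.Rpos := filter_subset _ _

lemma smul_mem_Rpos {c : ℝ} (hc : 0 < c) (hβ : β ∈ D.Rpos) (hcβ : c • β ∈ D.R) :
    c • β ∈ D.Rpos := by
  obtain ⟨u, hu⟩ := D.pos_char
  rw [hu _ hcβ, real_inner_smul_left]
  exact mul_pos hc ((hu β (D.pos_subset hβ)).mp hβ)

lemma inner_coroot_pos_of_rRefl_notMem_Rpos (hγ : γ ∈ D.Rpos) (hβ : β ∈ D.Rpos)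
    (h : rRefl γ β ∉ D.Rpos) : 0 < ⟪coroot γ, β⟫ := by
  obtain ⟨u, hu⟩ := D.pos_char
  have hγu := (hu γ (D.pos_subset hγ)).mp hγ
  have hβu := (hu β (D.pos_subset hβ)).mp hβ
  have hrβu : ⟪rRefl γ β, u⟫ ≤ 0 := by
    rw [← not_lt, ← hu _ (D.refl_mem γ (D.pos_subset hγ) β (D.pos_subset hβ))]
    exact h
  rw [rRefl, inner_sub_left, real_inner_smul_left] at hrβu
  by_contra! hle
  nlinarith

lemma two_inv_smul_two_inv_smul_notMem (hβ : β ∈ D.R) : (2:ℝ)⁻¹ • (2:ℝ)⁻¹ • β ∉ D.R := by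
  intro hmem
  obtain ⟨n, hn⟩ := D.integral β hβ _ hmem
  have hββ : ⟪β, β⟫ ≠ 0 := inner_self_ne_zero.mpr (D.root_ne_zero β hβ)
  have half : ⟪coroot β, (2:ℝ)⁻¹ • (2:ℝ)⁻¹ • β⟫ = 1 / 2 := by
    rw [inner_coroot_left, real_inner_smul_right, real_inner_smul_right]
    field_simp
  rw [half] at hn
  have : (2 * n : ℤ) = 1 := by exact_mod_cast (by linarith : (2 * n : ℝ) = 1)
  omega

lemma apply_mem_R_and_k_apply {g : V ≃ₗᵢ[ℝ] V} (hg : g ∈ weylGroup D) :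
    ∀ β ∈ D.R, g β ∈ D.R ∧ D.k (g β) = D.k β := by
  induction hg using Subgroup.closure_induction'' with
  | mem g hgen =>
    obtain ⟨α, hα, hgα⟩ := hgen
    intro β hβ
    rw [hgα]
    exact ⟨D.refl_mem α hα β hβ, D.k_inv α hα β hβ⟩
  | inv_mem g hgen =>
    obtain ⟨α, hα, hgα⟩ := hgen
    have hinv : ∀ y, g⁻¹ y = rRefl α y := fun y => g.injective <| by
      rw [hgα (rRefl α y), rRefl_rRefl (D.root_ne_zero α hα)]
      exact g.apply_symm_apply y
    intro β hβ
    rw [hinv]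
    exact ⟨D.refl_mem α hα β hβ, D.k_inv α hα β hβ⟩
  | one => simp
  | mul g h _ _ ihg ihh =>
    intro β hβ
    obtain ⟨hhβ, hkh⟩ := ihh β hβ
    obtain ⟨hghβ, hkgh⟩ := ihg (h β) hhβ
    exact ⟨hghβ, hkgh.trans hkh⟩

variable {D} {g : V ≃ₗᵢ[ℝ] V}

lemma apply_mem_R (hg : g ∈ weylGroup D) (hβ : β ∈ D.R) : g β ∈ D.R :=
  (D.apply_mem_R_and_k_apply hg β hβ).1

lemma k_apply (hg : g ∈ weylGroup D) (hβ : β ∈ D.R) : D.k (g β) = D.k β :=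
  (D.apply_mem_R_and_k_apply hg β hβ).2

lemma symm_apply_mem_R (hg : g ∈ weylGroup D) (hβ : β ∈ D.R) : g.symm β ∈ D.R :=
  apply_mem_R (inv_mem hg) hβ

variable (D)

def toRpos (β : V) : V := if β ∈ D.Rpos then β else -β

lemma toRpos_mem_Rpos (hβ : β ∈ D.R) : D.toRpos β ∈ D.Rpos := by
  unfold toRpos
  split_ifs with h
  · exact h
  · exact D.neg_mem_Rpos_of_notMem hβ h

lemma toRpos_of_mem (hβ : β ∈ D.Rpos) : D.toRpos β = β := if_pos hβ

lemma toRpos_of_notMem (hβ : β ∉ D.Rpos) : D.toRpos β = -β := if_neg hβ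

lemma toRpos_neg_of_mem (hβ : β ∈ D.Rpos) : D.toRpos (-β) = β := by
  rw [toRpos, if_neg (D.neg_notMem_Rpos hβ), neg_neg]

lemma k_toRpos (hβ : β ∈ D.R) : D.k (D.toRpos β) = D.k β := by
  unfold toRpos
  split_ifs
  · rfl
  · exact D.k_neg hβ

lemma toRpos_symm_apply_toRpos_apply (g : V ≃ₗᵢ[ℝ] V) (hβ : β ∈ D.Rpos) :
    D.toRpos (g.symm (D.toRpos (g β))) = β := by
  by_cases hgβ : g β ∈ D.Rpos
  · rw [D.toRpos_of_mem hgβ, g.symm_apply_apply, D.toRpos_of_mem hβ]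
  · rw [D.toRpos_of_notMem hgβ, map_neg, g.symm_apply_apply, D.toRpos_neg_of_mem hβ]

lemma sum_Rpos_toRpos_apply (hg : g ∈ weylGroup D) (f : V → ℝ) :
    ∑ β ∈ D.Rpos, f (D.toRpos (g β)) = ∑ α ∈ D.Rpos, f α :=
  sum_nbij' (fun β => D.toRpos (g β)) (fun α => D.toRpos (g.symm α))
    (fun β hβ => D.toRpos_mem_Rpos (apply_mem_R hg (D.pos_subset hβ)))
    (fun α hα => D.toRpos_mem_Rpos (symm_apply_mem_R hg (D.pos_subset hα)))
    (fun β hβ => D.toRpos_symm_apply_toRpos_apply g hβ)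
    (fun α hα => by simpa only [g.symm_symm] using D.toRpos_symm_apply_toRpos_apply g.symm hα)
    (fun _ _ => rfl)

lemma inner_rhoHO (y : V) : ⟪rhoHO D, y⟫ = 2⁻¹ * ∑ α ∈ D.Rpos, D.k α * ⟪α, y⟫ := by
  simp only [rhoHO, real_inner_smul_left, sum_inner]

def inversionSet (g : V ≃ₗᵢ[ℝ] V) : Finset V := D.Rpos.filter (fun β => g β ∉ D.Rpos)

lemma inner_rhoHO_sub_inner_rhoHO_apply (hg : g ∈ weylGroup D) (x : V) :
    ⟪rhoHO D, x⟫ - ⟪rhoHO D, g x⟫ = ∑ β ∈ D.inversionSet g, D.k β * ⟪β, x⟫ := by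
  have hsign : ∀ β ∈ D.Rpos, D.k (D.toRpos (g β)) * ⟪D.toRpos (g β), g x⟫ =
      if g β ∈ D.Rpos then D.k β * ⟪β, x⟫ else -(D.k β * ⟪β, x⟫) := by
    intro β hβ
    rw [D.k_toRpos (apply_mem_R hg (D.pos_subset hβ)), k_apply hg (D.pos_subset hβ), toRpos]
    split_ifs
    · rw [LinearIsometryEquiv.inner_map_map]
    · rw [inner_neg_left, LinearIsometryEquiv.inner_map_map, mul_neg]
  have hgx := D.sum_Rpos_toRpos_apply hg (fun α => D.k α * ⟪α, g x⟫)
  rw [sum_congr rfl hsign, sum_ite, sum_neg_distrib] at hgx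
  rw [inner_rhoHO, inner_rhoHO, ← hgx, ← sum_filter_add_sum_filter_not D.Rpos
    (fun β => g β ∈ D.Rpos), inversionSet]
  ring

def combinedMult (γ : V) : ℝ :=
  D.k γ + if (2:ℝ) • γ ∈ D.R then 2 * D.k ((2:ℝ) • γ) else 0

lemma combinedMult_pos (hγ : γ ∈ D.R) : 0 < D.combinedMult γ := by
  unfold combinedMult
  split_ifs with h2γ
  · linarith [D.k_pos γ hγ, D.k_pos _ h2γ]
  · linarith [D.k_pos γ hγ]

lemma sum_rRefl_mem_Rpos_eq_zero (hγ : γ ∈ D.R) :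
    ∑ α ∈ D.Rpos.filter (fun α => rRefl γ α ∈ D.Rpos), D.k α * ⟪α, coroot γ⟫ = 0 := by
  have hγ0 := D.root_ne_zero γ hγ
  have hodd : ∀ α ∈ D.Rpos.filter (fun α => rRefl γ α ∈ D.Rpos),
      D.k (rRefl γ α) * ⟪rRefl γ α, coroot γ⟫ = -(D.k α * ⟪α, coroot γ⟫) := by
    intro α hα
    rw [D.k_inv γ hγ α (D.pos_subset (mem_filter.mp hα).1), real_inner_comm,
      inner_coroot_rRefl hγ0, real_inner_comm, mul_neg]
  have hswap := sum_nbij' (rRefl γ) (rRefl γ)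
    (s := D.Rpos.filter (fun α => rRefl γ α ∈ D.Rpos))
    (t := D.Rpos.filter (fun α => rRefl γ α ∈ D.Rpos))
    (f := fun α => D.k α * ⟪α, coroot γ⟫) (g := fun α => -(D.k α * ⟪α, coroot γ⟫))
    (fun α hα => by simpa [rRefl_rRefl hγ0, and_comm] using hα)
    (fun α hα => by simpa [rRefl_rRefl hγ0, and_comm] using hα)
    (fun α _ => rRefl_rRefl hγ0 α) (fun α _ => rRefl_rRefl hγ0 α)
    (fun α hα => by rw [hodd α hα, neg_neg])
  rw [sum_neg_distrib] at hswap
  linarith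

lemma combinedMult_le_inner_rhoHO_coroot (hγ : γ ∈ D.Rpos) :
    D.combinedMult γ ≤ ⟪rhoHO D, coroot γ⟫ := by
  have hγR := D.pos_subset hγ
  have hγ0 := D.root_ne_zero γ hγR
  set B := D.Rpos.filter (fun α => rRefl γ α ∉ D.Rpos)
  set f : V → ℝ := fun α => D.k α * ⟪α, coroot γ⟫
  have hρ : 2 * ⟪rhoHO D, coroot γ⟫ = ∑ α ∈ B, f α := by
    rw [inner_rhoHO, ← sum_filter_add_sum_filter_not D.Rpos (fun α => rRefl γ α ∈ D.Rpos),
      D.sum_rRefl_mem_Rpos_eq_zero hγR]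
    ring
  have hB : ∀ α ∈ B, 0 ≤ f α := fun α hα => by
    obtain ⟨hα, hrα⟩ := mem_filter.mp hα
    show 0 ≤ D.k α * ⟪α, coroot γ⟫
    rw [real_inner_comm]
    exact mul_nonneg (D.k_pos α (D.pos_subset hα)).le
      (D.inner_coroot_pos_of_rRefl_notMem_Rpos hγ hα hrα).le
  have hγB : γ ∈ B := mem_filter.mpr ⟨hγ, by rw [rRefl_self hγ0]; exact D.neg_notMem_Rpos hγ⟩
  have hfγ : f γ = 2 * D.k γ := by
    show D.k γ * ⟪γ, coroot γ⟫ = _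
    rw [real_inner_comm, inner_coroot_self hγ0]
    ring
  unfold combinedMult
  split_ifs with h2γ
  · have h2γpos := D.smul_mem_Rpos two_pos hγ h2γ
    have h2γB : (2:ℝ) • γ ∈ B := mem_filter.mpr ⟨h2γpos, by
      rw [rRefl_smul, rRefl_self hγ0, smul_neg]; exact D.neg_notMem_Rpos h2γpos⟩
    have hf2γ : f ((2:ℝ) • γ) = 4 * D.k ((2:ℝ) • γ) := by
      show D.k ((2:ℝ) • γ) * ⟪(2:ℝ) • γ, coroot γ⟫ = _
      rw [real_inner_smul_left, real_inner_comm, inner_coroot_self hγ0]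
      ring
    have hne : γ ≠ (2:ℝ) • γ := by
      rw [ne_comm, two_smul, Ne, add_eq_left]
      exact hγ0
    have := sum_le_sum_of_subset_of_nonneg (insert_subset hγB
      (singleton_subset_iff.mpr h2γB)) (fun α hα _ => hB α hα)
    rw [sum_pair hne, hfγ, hf2γ] at this
    linarith
  · have := single_le_sum hB hγB
    linarith

lemma two_inv_smul_mem_filter_Rpos0 (hg : g ∈ weylGroup D) (hβ : β ∈ D.inversionSet g)
    (hhalf : (2:ℝ)⁻¹ • β ∈ D.R) :
    (2:ℝ)⁻¹ • β ∈ (Rpos0 D).filter (fun γ => g γ ∉ D.Rpos) := by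
  obtain ⟨hβpos, hgβ⟩ := mem_filter.mp hβ
  refine mem_filter.mpr ⟨mem_filter.mpr ⟨D.smul_mem_Rpos (by norm_num) hβpos hhalf,
    D.two_inv_smul_two_inv_smul_notMem (D.pos_subset hβpos)⟩, fun hpos => hgβ ?_⟩
  have hdouble : g β = (2:ℝ) • g ((2:ℝ)⁻¹ • β) := by
    rw [map_smul, smul_smul]
    norm_num
  have hgβR := apply_mem_R hg (D.pos_subset hβpos)
  rw [hdouble] at hgβR ⊢
  exact D.smul_mem_Rpos two_pos hpos hgβR

lemma sum_inversionSet_le (hg : g ∈ weylGroup D) (hx : ∀ β ∈ D.Rpos, 0 ≤ ⟪β, x⟫) :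
    ∑ β ∈ D.inversionSet g, D.k β * ⟪β, x⟫ ≤
      ∑ γ ∈ (Rpos0 D).filter (fun γ => g γ ∉ D.Rpos), D.combinedMult γ * ⟪γ, x⟫ := by
  set T₀ := (Rpos0 D).filter (fun γ => g γ ∉ D.Rpos)
  set T₁ := (D.inversionSet g).filter (fun β => (2:ℝ)⁻¹ • β ∈ D.R)
  set c : V → ℝ := fun γ => if (2:ℝ) • γ ∈ D.R then 2 * D.k ((2:ℝ) • γ) else 0
  have hT₀ : (D.inversionSet g).filter (fun β => ¬ (2:ℝ)⁻¹ • β ∈ D.R) = T₀ :=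
    filter_comm ..
  have hc : ∀ γ ∈ T₀, 0 ≤ c γ * ⟪γ, x⟫ := fun γ hγ => by
    refine mul_nonneg ?_ (hx γ (D.Rpos0_subset (mem_filter.mp hγ).1))
    simp only [c]
    split_ifs with h
    · linarith [D.k_pos _ h]
    · rfl
  have hT₁ : ∑ β ∈ T₁, D.k β * ⟪β, x⟫ ≤ ∑ γ ∈ T₀, c γ * ⟪γ, x⟫ :=
    calc ∑ β ∈ T₁, D.k β * ⟪β, x⟫
        = ∑ γ ∈ T₁.image ((2:ℝ)⁻¹ • ·), c γ * ⟪γ, x⟫ := by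
          rw [sum_image fun _ _ _ _ h => smul_right_injective V (by norm_num) h]
          refine sum_congr rfl fun β hβ => ?_
          have hβR := D.pos_subset (mem_filter.mp (mem_filter.mp hβ).1).1
          have hdouble : (2:ℝ) • (2:ℝ)⁻¹ • β = β := by rw [smul_smul]; norm_num
          simp only [c, hdouble, hβR, if_true, real_inner_smul_left]
          ring
      _ ≤ ∑ γ ∈ T₀, c γ * ⟪γ, x⟫ := by
          refine sum_le_sum_of_subset_of_nonneg ?_ fun γ hγ _ => hc γ hγ
          intro γ hγ
          obtain ⟨β, hβ, rfl⟩ := mem_image.mp hγ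
          obtain ⟨hβinv, hhalf⟩ := mem_filter.mp hβ
          exact D.two_inv_smul_mem_filter_Rpos0 hg hβinv hhalf
  rw [← sum_filter_not_add_sum_filter _ (fun β => (2:ℝ)⁻¹ • β ∈ D.R), hT₀]
  calc ∑ γ ∈ T₀, D.k γ * ⟪γ, x⟫ + ∑ β ∈ T₁, D.k β * ⟪β, x⟫
      ≤ ∑ γ ∈ T₀, D.k γ * ⟪γ, x⟫ + ∑ γ ∈ T₀, c γ * ⟪γ, x⟫ := by gcongr
    _ = ∑ γ ∈ T₀, D.combinedMult γ * ⟪γ, x⟫ := by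
      rw [← sum_add_distrib]
      simp only [combinedMult, c, add_mul]

lemma neg_apply_mem_Rpos0 (hg : g ∈ weylGroup D) (hγ : γ ∈ Rpos0 D) (hgγ : g γ ∉ D.Rpos) :
    -(g γ) ∈ Rpos0 D := by
  obtain ⟨hγpos, hγind⟩ := mem_filter.mp hγ
  refine mem_filter.mpr ⟨D.neg_mem_Rpos_of_notMem (apply_mem_R hg (D.pos_subset hγpos))
    hgγ, fun hhalf => hγind ?_⟩
  have := D.neg_mem _ (symm_apply_mem_R hg hhalf)
  rwa [map_smul, map_neg, g.symm_apply_apply, smul_neg, neg_neg] at this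

lemma neg_apply_mem_filter_Rpos0 (hg : g ∈ weylGroup D)
    (hγ : γ ∈ (Rpos0 D).filter (fun γ => g γ ∉ D.Rpos)) :
    -(g γ) ∈ (Rpos0 D).filter (fun α => -(g.symm α) ∈ D.Rpos) := by
  obtain ⟨hγ0, hgγ⟩ := mem_filter.mp hγ
  refine mem_filter.mpr ⟨D.neg_apply_mem_Rpos0 hg hγ0 hgγ, ?_⟩
  rw [map_neg, g.symm_apply_apply, neg_neg]
  exact D.Rpos0_subset hγ0

lemma card_filter_Rpos0_apply_notMem_Rpos (hg : g ∈ weylGroup D) :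
    ((Rpos0 D).filter (fun γ => g γ ∉ D.Rpos)).card =
      ((Rpos0 D).filter (fun α => -(g.symm α) ∈ Rpos0 D)).card := by
  refine card_nbij' (fun γ => -(g γ)) (fun α => -(g.symm α)) ?_ ?_ ?_ ?_
  · intro γ hγ
    obtain ⟨hγ0, hgγ⟩ := mem_filter.mp hγ
    refine mem_filter.mpr ⟨D.neg_apply_mem_Rpos0 hg hγ0 hgγ, ?_⟩
    rwa [map_neg, g.symm_apply_apply, neg_neg]
  · intro α hα
    obtain ⟨hα0, hgα⟩ := mem_filter.mp hα
    refine mem_filter.mpr ⟨hgα, ?_⟩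
    rw [map_neg, g.apply_symm_apply]
    exact D.neg_notMem_Rpos (mem_filter.mp hα0).1
  · intro γ _
    simp
  · intro α _
    simp

lemma inner_nonneg_of_mem_closure_posChamber (hx : x ∈ closure (posChamber D))
    (hβ : β ∈ D.Rpos) : 0 ≤ ⟪β, x⟫ :=
  closure_minimal (t := {y | 0 ≤ ⟪β, y⟫}) (fun _ hy => (hy β hβ).le)
    (isClosed_le continuous_const (continuous_const.inner continuous_id)) hx

end HOData

theorem statement11_general (D : HOData E) (hne0 : (Rpos0 D).Nonempty)
    (w : weylGroup D) (x : E) (hx : x ∈ closure (posChamber D)) :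
    ⟪rhoHO D, x⟫ - ⟪rhoHO D, w.1 x⟫ ≤
      ((Rpos0 D).sup' hne0 (fun α => ⟪rhoHO D, coroot α⟫)) *
      (((Rpos0 D).filter (fun α => -(w.1.symm α) ∈ Rpos0 D)).card : ℝ) *
      (insert (0 : ℝ)
        (((Rpos0 D).filter (fun α => -(w.1.symm α) ∈ D.Rpos)).image
          (fun α => |⟪α, w.1 x⟫|))).max' (Finset.insert_nonempty _ _) := by
  set T₀ := (Rpos0 D).filter (fun γ => w.1 γ ∉ D.Rpos)
  set K := (Rpos0 D).sup' hne0 (fun α => ⟪rhoHO D, coroot α⟫)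
  set M := (insert (0 : ℝ) (((Rpos0 D).filter (fun α => -(w.1.symm α) ∈ D.Rpos)).image
    (fun α => |⟪α, w.1 x⟫|))).max' (insert_nonempty _ _)
  have hx_nonneg : ∀ β ∈ D.Rpos, 0 ≤ ⟪β, x⟫ := fun _ hβ =>
    D.inner_nonneg_of_mem_closure_posChamber hx hβ
  have hK : ∀ γ ∈ Rpos0 D, D.combinedMult γ ≤ K := fun γ hγ =>
    (D.combinedMult_le_inner_rhoHO_coroot (D.Rpos0_subset hγ)).trans
      (le_sup' (fun α => ⟪rhoHO D, coroot α⟫) hγ)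
  have hM : ∀ γ ∈ T₀, ⟪γ, x⟫ ≤ M := fun γ hγ =>
    calc ⟪γ, x⟫ ≤ |⟪-(w.1 γ), w.1 x⟫| := by
          rw [inner_neg_left, abs_neg, LinearIsometryEquiv.inner_map_map]
          exact le_abs_self _
      _ ≤ M := le_max' _ _ (mem_insert_of_mem (mem_image_of_mem (fun α => |⟪α, w.1 x⟫|)
          (D.neg_apply_mem_filter_Rpos0 w.2 hγ)))
  calc ⟪rhoHO D, x⟫ - ⟪rhoHO D, w.1 x⟫
      = ∑ β ∈ D.inversionSet w.1, D.k β * ⟪β, x⟫ := D.inner_rhoHO_sub_inner_rhoHO_apply w.2 x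
    _ ≤ ∑ γ ∈ T₀, D.combinedMult γ * ⟪γ, x⟫ := D.sum_inversionSet_le w.2 hx_nonneg
    _ ≤ ∑ _γ ∈ T₀, K * M := sum_le_sum fun γ hγ => by
      obtain ⟨hγ0, -⟩ := mem_filter.mp hγ
      exact mul_le_mul (hK γ hγ0) (hM γ hγ) (hx_nonneg γ (D.Rpos0_subset hγ0))
        ((D.combinedMult_pos (D.pos_subset (D.Rpos0_subset hγ0))).le.trans (hK γ hγ0))
    _ = K * (((Rpos0 D).filter (fun α => -(w.1.symm α) ∈ Rpos0 D)).card : ℝ) * M := by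
      rw [sum_const, nsmul_eq_mul, D.card_filter_Rpos0_apply_notMem_Rpos w.2]
      ring

/-- with `K' = max_{α ∈ R₀⁺} (ρ, α∨)`, for every `w ∈ W` and `x ∈ ā₊`,
`(ρ,x) - (ρ,wx) ≤ K' · l(w) · max_{α ∈ R₀⁺ ∩ wR⁻} |(α, wx)|`, where
`l(w) = |R₀⁺ ∩ wR₀⁻|` and the maximum of the empty set is `0`. -/
theorem statement11 (D : HOData E) [Fintype (weylGroup D)] (hne0 : (Rpos0 D).Nonempty)
    (w : weylGroup D) (x : E) (hx : x ∈ closure (posChamber D)) :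
    ⟪rhoHO D, x⟫ - ⟪rhoHO D, w.1 x⟫ ≤
      ((Rpos0 D).sup' hne0 (fun α => ⟪rhoHO D, coroot α⟫)) *
      (((Rpos0 D).filter (fun α => -(w.1.symm α) ∈ Rpos0 D)).card : ℝ) *
      (insert (0 : ℝ)
        (((Rpos0 D).filter (fun α => -(w.1.symm α) ∈ D.Rpos)).image
          (fun α => |⟪α, w.1 x⟫|))).max' (Finset.insert_nonempty _ _) :=
  statement11_general D hne0 w x hx
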